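/- If f = g ∘ h where g is an irreducible local rule and h is a projection, then the reflected rule satisfies r̂(g ∘ h) = r̂g ∘ r̂h, where r̂h = r ∘ h ∘ r; consequently r̂f = f if and only if r̂g = g and r̂h = h. -/

import Mathlib

/-- `f` depends on coordinate `j`. -/
def RuleDependsOn {A : Type*} {n : ℕ} (f : (Fin n → A) → A) (j : Fin n) : Prop :=
  ∃ a b : Fin n → A, (∀ k, k ≠ j → a k = b k) ∧ f a ≠ f b

/-- Reflection of a word: `(r w)ₖ = w_{n+1-k}`. -/
def reflWord {A : Type*} {n : ℕ} (a : Fin n → A) : Fin n → A := fun k => a k.rev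

/-- Reflection operator on local rules: `r̂f = f ∘ r`. -/
def reflRule {A : Type*} {n : ℕ} (f : (Fin n → A) → A) : (Fin n → A) → A :=
  fun a => f (reflWord a)

/-- Reflection operator on projections (or any map `Aⁿ → Aᵐ`): `r̂h = r ∘ h ∘ r`. -/
def reflProj {A : Type*} {n m : ℕ} (h : (Fin n → A) → (Fin m → A)) :
    (Fin n → A) → (Fin m → A) :=
  fun a => reflWord (h (reflWord a))

/-- `h : Aⁿ → Aᵐ` is a projection. -/
def IsProjection {A : Type*} {n m : ℕ} (h : (Fin n → A) → (Fin m → A)) : Prop :=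
  ∃ p : Fin m → Fin n, StrictMono p ∧ ∀ a k, h a k = a (p k)

/-!
Reflection commutes with composition: `r̂(g ∘ h) = r̂g ∘ r̂h` because `r` is an involution, and
`r̂h` is again the projection onto the reflected positions. Conversely, if `r̂f = f` then
`f = r̂g ∘ r̂h` is a second factorization of `f` into an irreducible rule and a projection:
a rule `g ∘ h` depends exactly on the coordinates selected by `h`, which pins down `h`, and
`g` is then recovered by evaluating `f` on words extending a given one.
-/

open Function

section Reflection

variable {A : Type*} {n m : ℕ}

@[simp]
lemma reflWord_reflWord (a : Fin n → A) : reflWord (reflWord a) = a := by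
  funext k
  simp [reflWord]

lemma reflRule_comp (g : (Fin m → A) → A) (h : (Fin n → A) → (Fin m → A)) :
    reflRule (g ∘ h) = reflRule g ∘ reflProj h := by
  funext a
  simp [reflRule, reflProj]

lemma RuleDependsOn.reflRule {g : (Fin m → A) → A} {j : Fin m}
    (hg : RuleDependsOn g j.rev) : RuleDependsOn (reflRule g) j := by
  obtain ⟨a, b, hab, hne⟩ := hg
  refine ⟨reflWord a, reflWord b, fun k hk => hab k.rev (Fin.rev_injective.ne hk), ?_⟩
  simpa [_root_.reflRule] using hne

lemma reflProj_comp_right (p : Fin m → Fin n) :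
    reflProj (fun a : Fin n → A => a ∘ p) = fun a => a ∘ (Fin.rev ∘ p ∘ Fin.rev) :=
  rfl

lemma StrictMono.rev_comp_comp_rev {p : Fin m → Fin n} (hp : StrictMono p) :
    StrictMono (Fin.rev ∘ p ∘ Fin.rev) :=
  Fin.rev_strictAnti.comp (hp.comp_strictAnti Fin.rev_strictAnti)

end Reflection

section Factorization

variable {A : Type*} {n m : ℕ}

lemma nonempty_of_forall_ruleDependsOn {g : (Fin m → A) → A} (hg : ∀ j, RuleDependsOn g j) :
    Nonempty A := by
  cases m with
  | zero => exact ⟨g Fin.elim0⟩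
  | succ m =>
    obtain ⟨a, -⟩ := hg 0
    exact ⟨a 0⟩

lemma ruleDependsOn_comp_right_iff [Nonempty A] {g : (Fin m → A) → A}
    (hg : ∀ j, RuleDependsOn g j) {p : Fin m → Fin n} (hp : Injective p) (i : Fin n) :
    RuleDependsOn (fun a => g (a ∘ p)) i ↔ i ∈ Set.range p := by
  constructor
  · rintro ⟨a, b, hab, hne⟩
    by_contra hi
    exact hne (congrArg g (funext fun j => hab (p j) fun hj => hi ⟨j, hj⟩))
  · rintro ⟨k, rfl⟩
    obtain ⟨a, b, hab, hne⟩ := hg k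
    let c : Fin n → A := fun _ => Classical.arbitrary A
    refine ⟨extend p a c, extend p b c, fun i hi => ?_, ?_⟩
    · by_cases hrange : ∃ j, p j = i
      · obtain ⟨j, rfl⟩ := hrange
        rw [hp.extend_apply, hp.extend_apply]
        exact hab j (hp.ne_iff.mp hi)
      · rw [extend_apply' _ _ _ hrange, extend_apply' _ _ _ hrange]
    · simpa only [extend_comp hp] using hne

lemma eq_of_comp_right_eq_comp_right {g g' : (Fin m → A) → A} {p p' : Fin m → Fin n}
    (hg : ∀ j, RuleDependsOn g j) (hg' : ∀ j, RuleDependsOn g' j)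
    (hp : StrictMono p) (hp' : StrictMono p')
    (heq : (fun a => g (a ∘ p)) = fun a => g' (a ∘ p')) :
    p = p' ∧ g = g' := by
  have := nonempty_of_forall_ruleDependsOn hg
  have hrange : Set.range p = Set.range p' := by
    ext i
    rw [← ruleDependsOn_comp_right_iff hg hp.injective, heq,
      ruleDependsOn_comp_right_iff hg' hp'.injective]
  obtain rfl : p = p' := (hp.range_inj hp').mp hrange
  refine ⟨rfl, funext fun a => ?_⟩
  simpa only [extend_comp hp.injective] using
    congrFun heq (extend p a fun _ => Classical.arbitrary A)

end Factorization

theorem stmt10_general {A : Type*} {n m : ℕ}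
    (g : (Fin m → A) → A) (h : (Fin n → A) → (Fin m → A))
    (hg : ∀ j, RuleDependsOn g j) (hh : IsProjection h)
    (f : (Fin n → A) → A) (hf : f = g ∘ h) :
    reflRule f = reflRule g ∘ reflProj h ∧
      (reflRule f = f ↔ reflRule g = g ∧ reflProj h = h) := by
  subst hf
  refine ⟨reflRule_comp g h, fun hfix => ?_, fun ⟨hgr, hhr⟩ => by rw [reflRule_comp, hgr, hhr]⟩
  obtain ⟨p, hp, hph⟩ := hh
  obtain rfl : h = fun a => a ∘ p := funext fun a => funext (hph a)
  rw [reflRule_comp, reflProj_comp_right] at hfix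
  obtain ⟨hpp, hgg⟩ := eq_of_comp_right_eq_comp_right (fun j => (hg j.rev).reflRule) hg
    hp.rev_comp_comp_rev hp hfix
  exact ⟨hgg, by rw [reflProj_comp_right, hpp]⟩

theorem stmt10 {A : Type*} [Fintype A] {n m : ℕ}
    (g : (Fin m → A) → A) (h : (Fin n → A) → (Fin m → A))
    (hg : ∀ j, RuleDependsOn g j) (hh : IsProjection h)
    (f : (Fin n → A) → A) (hf : f = g ∘ h) :
    reflRule f = reflRule g ∘ reflProj h ∧
      (reflRule f = f ↔ reflRule g = g ∧ reflProj h = h) :=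
  stmt10_general g h hg hh f hf
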